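/- arXiv:2010.13475 — 2 statements merged into one kernel-verified Lean document; each statement's English description precedes it below -/
import Mathlib

section
/- For every integer n ≥ 1, the minimum size of a vertex cover of the non-commuting graph Γ(U_{6n}) is τ(Γ(U_{6n})) = 3n. -/
/-- The inversion automorphism of `Multiplicative (ZMod 3)` (i.e. `b ↦ b⁻¹`). -/
def negAut : MulAut (Multiplicative (ZMod 3)) := MulEquiv.inv (Multiplicative (ZMod 3))

lemma negAut_sq : negAut * negAut = 1 := by
  ext x
  simp [negAut]

/-- The action of `ZMod (2*n)` on `Multiplicative (ZMod 3)`, where the generator acts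
by inversion (negation). -/
def U6nAct (n : ℕ) : Multiplicative (ZMod (2 * n)) →* MulAut (Multiplicative (ZMod 3)) :=
  AddMonoidHom.toMultiplicativeLeft
    (ZMod.lift (2 * n) ⟨zmultiplesHom _ (Additive.ofMul negAut), by
      show ((2 * n : ℕ) : ℤ) • Additive.ofMul negAut = 0
      have : negAut ^ (2 * n) = 1 := by
        rw [pow_mul, pow_two, negAut_sq, one_pow]
      rw [← zpow_natCast negAut, Nat.cast_mul] at this
      rw [show ((2 * n : ℕ) : ℤ) • Additive.ofMul negAut
            = Additive.ofMul (negAut ^ ((2 * n : ℕ) : ℤ)) from rfl]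
      rw [Nat.cast_mul, this]; rfl⟩)

/-- The group `U_{6n} = ⟨a, b | a^(2n) = b³ = 1, a⁻¹ b a = b⁻¹⟩`, realized as the
semidirect product `(ZMod 3) ⋊ (ZMod (2n))` where the generator of `ZMod (2n)` acts by
negation. -/
abbrev U6n (n : ℕ) := SemidirectProduct (Multiplicative (ZMod 3))
    (Multiplicative (ZMod (2 * n))) (U6nAct n)

/-- The generator `a` of `U_{6n}`, of order `2n`. -/
def Ua (n : ℕ) : U6n n := SemidirectProduct.inr (Multiplicative.ofAdd 1)

/-- The generator `b` of `U_{6n}`, of order `3`. -/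
def Ub (n : ℕ) : U6n n := SemidirectProduct.inl (Multiplicative.ofAdd 1)

/-- The non-commuting graph of `U_{6n}`: vertices are the non-central elements, two
distinct vertices are adjacent iff they do not commute. -/
def ncGraph (n : ℕ) : SimpleGraph {x : U6n n // x ∉ Subgroup.center (U6n n)} where
  Adj u v := u.val * v.val ≠ v.val * u.val
  symm := ⟨fun _ _ h => fun e => h e.symm⟩
  loopless := ⟨fun _ h => h rfl⟩

/-!
A set of pairwise commuting non-central elements of a finite group `G` lies, together with the
centre, in the centralizer of a non-central element, which is a proper subgroup. So it has at most
`|G|/2 - |Z(G)|` elements, and every vertex cover of the non-commuting graph, whose complement is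
such a set, has at least `|G|/2` elements. Conversely, the complement of an abelian subgroup is a
vertex cover, of size `|G|/2` when the subgroup has index 2. In `U_{6n}` the elements acting
trivially on `⟨b⟩`, i.e. `b^i a^(2k)`, form such a subgroup.
-/

open Subgroup

section NonCommutingGraph

variable (G : Type*) [Group G]

def nonCommutingGraph : SimpleGraph {x : G // x ∉ center G} where
  Adj u v := u.val * v.val ≠ v.val * u.val
  symm := ⟨fun _ _ h e => h e.symm⟩
  loopless := ⟨fun _ h => h rfl⟩

variable {G}

theorem isVertexCover_nonCommutingGraph_of_isMulCommutative (H : Subgroup G)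
    [IsMulCommutative H] : (nonCommutingGraph G).IsVertexCover {v | v.val ∉ H} := by
  intro u v huv
  by_contra! h
  simp only [Set.mem_ofPred_eq, not_not] at h
  exact huv (setLike_mul_comm h.1 h.2)

variable [Finite G]

theorem two_mul_card_centralizer_le {t : G} (ht : t ∉ center G) :
    2 * Nat.card (centralizer {t}) ≤ Nat.card G := by
  have hne : centralizer {t} ≠ ⊤ := fun h =>
    ht (centralizer_eq_top_iff_subset.mp h rfl)
  rw [← card_mul_index (centralizer {t}), mul_comm 2]
  exact Nat.mul_le_mul_left _ (one_lt_index_of_ne_top hne)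

theorem two_mul_ncard_add_card_center_le_of_isIndepSet (hG : center G ≠ ⊤)
    {T : Set {x : G // x ∉ center G}} (hT : (nonCommutingGraph G).IsIndepSet T) :
    2 * (T.ncard + Nat.card (center G)) ≤ Nat.card G := by
  obtain ⟨t, hT_comm⟩ :
      ∃ t : {x : G // x ∉ center G}, ∀ u ∈ T, u.val * t.val = t.val * u.val := by
    rcases T.eq_empty_or_nonempty with rfl | ⟨t, ht⟩
    · obtain ⟨g, -, hg⟩ := SetLike.exists_of_lt hG.lt_top
      exact ⟨⟨g, hg⟩, by simp⟩
    · refine ⟨t, fun u hu => ?_⟩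
      by_cases hut : u = t
      · rw [hut]
      · exact not_not.mp (hT hu ht hut)
  have hsub : Subtype.val '' T ∪ center G ⊆ centralizer {t.val} := by
    rintro x (⟨u, hu, rfl⟩ | hx)
    · exact mem_centralizer_singleton_iff.mpr (hT_comm u hu)
    · exact mem_centralizer_singleton_iff.mpr (mem_center_iff.mp hx t.val).symm
  have hdisj : Disjoint (Subtype.val '' T) (center G : Set G) :=
    Set.disjoint_left.mpr fun _ ⟨u, _, hu⟩ => hu ▸ u.prop
  calc 2 * (T.ncard + Nat.card (center G))
      = 2 * (Subtype.val '' T ∪ center G).ncard := by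
        rw [Set.ncard_union_eq hdisj, Set.ncard_image_of_injective _ Subtype.val_injective,
          ← SetLike.coe_sort_coe, Nat.card_coe_set_eq]
    _ ≤ 2 * Nat.card (centralizer {t.val}) := by
        rw [← SetLike.coe_sort_coe, Nat.card_coe_set_eq]
        exact Nat.mul_le_mul_left _ (Set.ncard_le_ncard hsub)
    _ ≤ Nat.card G := two_mul_card_centralizer_le t.prop

theorem card_le_two_mul_ncard_of_isVertexCover (hG : center G ≠ ⊤)
    {S : Set {x : G // x ∉ center G}} (hS : (nonCommutingGraph G).IsVertexCover S) :
    Nat.card G ≤ 2 * S.ncard := by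
  have hT := two_mul_ncard_add_card_center_le_of_isIndepSet hG
    (SimpleGraph.isIndepSet_compl_iff_isVertexCover.mpr hS)
  have hV : S.ncard + Sᶜ.ncard + Nat.card (center G) = Nat.card G := by
    rw [Set.ncard_add_ncard_compl, ← SetLike.coe_sort_coe, Nat.card_coe_set_eq,
      ← Set.ncard_compl_add_ncard (center G : Set G),
      ← Nat.card_coe_set_eq (center G : Set G)ᶜ]
    rfl
  omega

theorem ncard_setOf_val_notMem_le (H : Subgroup G) :
    {v : {x : G // x ∉ center G} | v.val ∉ H}.ncard ≤ Nat.card G - Nat.card H := by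
  rw [← Set.ncard_image_of_injective _ Subtype.val_injective, ← SetLike.coe_sort_coe,
    Nat.card_coe_set_eq, ← Set.ncard_compl]
  exact Set.ncard_le_ncard (Set.image_subset_iff.mpr fun v hv => hv)

theorem isLeast_ncard_isVertexCover_nonCommutingGraph (hG : center G ≠ ⊤) (H : Subgroup G)
    [IsMulCommutative H] (hH : H.index = 2) :
    IsLeast {k | ∃ S, (nonCommutingGraph G).IsVertexCover S ∧ S.ncard = k} (Nat.card H) := by
  have hcard : Nat.card H * 2 = Nat.card G := hH ▸ H.card_mul_index
  have hcover := isVertexCover_nonCommutingGraph_of_isMulCommutative H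
  refine ⟨⟨_, hcover, ?_⟩, ?_⟩
  · have := ncard_setOf_val_notMem_le H
    have := card_le_two_mul_ncard_of_isVertexCover hG hcover
    omega
  · rintro k ⟨S, hS, rfl⟩
    have := card_le_two_mul_ncard_of_isVertexCover hG hS
    omega

end NonCommutingGraph

namespace SemidirectProduct

variable {N K : Type*} [CommGroup N] [CommGroup K] (φ : K →* MulAut N)

/-- On the kernel of the action the semidirect product is the direct product. -/
instance isMulCommutative_ker_comp_rightHom :
    IsMulCommutative (φ.comp (rightHom (φ := φ))).ker :=
  .of_comm fun ⟨a, ha⟩ ⟨b, hb⟩ => by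
    rw [MonoidHom.mem_ker, MonoidHom.comp_apply, rightHom_eq_right] at ha hb
    refine Subtype.ext (SemidirectProduct.ext ?_ (mul_comm a.right b.right))
    show a.left * φ a.right b.left = b.left * φ b.right a.left
    rw [ha, hb, MulAut.one_apply, MulAut.one_apply, mul_comm]

theorem index_ker_comp_rightHom :
    (φ.comp (rightHom (φ := φ))).ker.index = Nat.card φ.range := by
  rw [index_ker, MonoidHom.range_comp, MonoidHom.range_eq_top.mpr rightHom_surjective,
    ← MonoidHom.range_eq_map]

end SemidirectProduct

theorem zpowers_ofAdd_one_zmod (m : ℕ) : zpowers (Multiplicative.ofAdd (1 : ZMod m)) = ⊤ := by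
  refine eq_top_iff.mpr fun y _ => ⟨(y.toAdd.cast : ℤ), ?_⟩
  simp [← ofAdd_zsmul]

theorem orderOf_negAut : orderOf negAut = 2 := by
  refine orderOf_eq_prime (by rw [sq, negAut_sq]) fun h => ?_
  have := DFunLike.congr_fun h (Multiplicative.ofAdd 1)
  simp [negAut] at this
  exact absurd this (by decide)

section U6n

variable (n : ℕ)

theorem U6nAct_ofAdd_one : U6nAct n (Multiplicative.ofAdd 1) = negAut := by
  rw [show (1 : ZMod (2 * n)) = ((1 : ℤ) : ZMod (2 * n)) from Int.cast_one.symm]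
  simp only [U6nAct, AddMonoidHom.toMultiplicativeLeft, Equiv.coe_fn_mk]
  exact congrArg Additive.toMul (ZMod.lift_coe (2 * n) _ 1)

theorem range_U6nAct : (U6nAct n).range = zpowers negAut := by
  rw [MonoidHom.range_eq_map, ← zpowers_ofAdd_one_zmod, MonoidHom.map_zpowers, U6nAct_ofAdd_one]

theorem card_U6n : Nat.card (U6n n) = 6 * n := by
  rw [SemidirectProduct.card, Nat.card_congr Multiplicative.toAdd,
    Nat.card_congr Multiplicative.toAdd, Nat.card_zmod, Nat.card_zmod]
  ring

theorem Ua_mul_Ub_ne : Ua n * Ub n ≠ Ub n * Ua n := fun h => by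
  have := congrArg SemidirectProduct.left h
  simp [Ua, Ub, U6nAct_ofAdd_one, negAut] at this
  exact absurd this (by decide)

theorem center_U6n_ne_top : center (U6n n) ≠ ⊤ := fun h =>
  Ua_mul_Ub_ne n (mem_center_iff.mp (h ▸ mem_top (Ub n)) (Ua n))

theorem index_ker_U6nAct_comp_rightHom :
    ((U6nAct n).comp (SemidirectProduct.rightHom (φ := U6nAct n))).ker.index = 2 := by
  rw [SemidirectProduct.index_ker_comp_rightHom, range_U6nAct, Nat.card_zpowers, orderOf_negAut]

end U6n

/-- The minimum size of a vertex cover of the non-commuting graph of `U_{6n}` is `3n`. -/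
theorem U6n_vertex_cover (n : ℕ) (hn : 1 ≤ n) :
    IsLeast {k | ∃ S : Set {x : U6n n // x ∉ Subgroup.center (U6n n)},
      (∀ u v, (ncGraph n).Adj u v → u ∈ S ∨ v ∈ S) ∧ S.ncard = k} (3 * n) := by
  have : Finite (U6n n) := Nat.finite_of_card_ne_zero (by rw [card_U6n]; omega)
  set H := ((U6nAct n).comp (SemidirectProduct.rightHom (φ := U6nAct n))).ker
  have hH : H.index = 2 := index_ker_U6nAct_comp_rightHom n
  have hcard : Nat.card H = 3 * n := by
    have := H.card_mul_index
    rw [hH, card_U6n] at this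
    omega
  rw [← hcard]
  exact isLeast_ncard_isVertexCover_nonCommutingGraph (center_U6n_ne_top n) H hH
end

section
/- Let n ≥ 1 and let Γ = Γ(U_{6n}) be the non-commuting graph of U_{6n}. The number s_k of independent sets of Γ of cardinality k is: s_0 = 1; s_k = C(2n, k) + 3·C(n, k) for 1 ≤ k ≤ n; s_k = C(2n, k) for n < k ≤ 2n; and s_k = 0 for k > 2n (where C(m, k) denotes the binomial coefficient). Equivalently, the independence polynomial of Γ is I(Γ; x) = 1 + Σ_{k=1}^{n} (C(2n,k) + 3·C(n,k)) x^k + Σ_{k=n+1}^{2n} C(2n,k) x^k. -/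
/-- The number of independent sets of cardinality `k` of the non-commuting graph of
`U_{6n}`, i.e. the `k`-th coefficient of the independence polynomial. -/
noncomputable def indepCount (n k : ℕ) : ℕ :=
  {S : Finset {x : U6n n // x ∉ Subgroup.center (U6n n)} |
    (S : Set _).Pairwise (fun u v => ¬ (ncGraph n).Adj u v) ∧ S.card = k}.ncard

/-!
In `U_{6n}` the element `a^j` acts on `⟨b⟩ ≅ ZMod 3` by `(-1)^j`, so two non-central elements
`b^i a^j` and `b^i' a^j'` commute iff `j, j'` are both even, or both odd with `i = i'`
(here `2x = 0 → x = 0` in `ZMod 3`).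
Hence commuting is an equivalence relation on the non-central elements, with four classes:
the `2n` elements `b^i a^j` with `i ≠ 0` and `j` even, and for each `i` the `n` elements `b^i a^j`
with `j` odd. An independent set of size `k ≥ 1` is a `k`-subset of one class.
-/

open Finset

theorem ncard_setOf_pairwise_eq_and_card_eq {V L : Type*} [Fintype V] [DecidableEq V]
    [Fintype L] [DecidableEq L] (f : V → L) {k : ℕ} (hk : k ≠ 0) :
    {S : Finset V | (S : Set V).Pairwise (fun u v => f u = f v) ∧ #S = k}.ncard =
      ∑ ℓ, (#{v | f v = ℓ}).choose k := by
  have hfib : {S : Finset V | (S : Set V).Pairwise (fun u v => f u = f v) ∧ #S = k} =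
      ↑(univ.biUnion fun ℓ => powersetCard k {v | f v = ℓ}) := by
    ext S
    simp only [Set.mem_ofPred_eq, coe_biUnion, coe_univ, Set.mem_univ, Set.iUnion_true,
      Set.mem_iUnion, mem_coe, mem_powersetCard, subset_iff, mem_filter_univ]
    constructor
    · rintro ⟨hS, rfl⟩
      obtain ⟨v, -⟩ := card_ne_zero.1 hk
      have : Nonempty L := ⟨f v⟩
      obtain ⟨ℓ, hℓ⟩ := (Set.pairwise_eq_iff_exists_eq _ f).1 hS
      exact ⟨ℓ, hℓ, rfl⟩
    · rintro ⟨ℓ, hℓ, rfl⟩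
      exact ⟨fun u hu v hv _ => (hℓ hu).trans (hℓ hv).symm, rfl⟩
  rw [hfib, Set.ncard_coe_finset, card_biUnion]
  · simp only [card_powersetCard]
  · intro ℓ _ ℓ' _ hne
    refine disjoint_left.2 fun S hS hS' => ?_
    rw [mem_powersetCard] at hS hS'
    obtain ⟨v, hv⟩ := card_ne_zero.1 (hS.2.trans_ne hk)
    exact hne (((mem_filter_univ v).1 (hS.1 hv)).symm.trans ((mem_filter_univ v).1 (hS'.1 hv)))

lemma negAut_zpow (z : ℤ) : negAut ^ z = if Even z then 1 else negAut := by
  have h2 : negAut ^ (2 : ℤ) = 1 := by rw [zpow_two, negAut_sq]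
  obtain ⟨m, rfl | rfl⟩ := Int.even_or_odd' z
  · simp [zpow_mul, h2]
  · simp [zpow_add, zpow_mul, h2]

namespace U6n

variable {n : ℕ}

def parity (n : ℕ) : ZMod (2 * n) →+* ZMod 2 := ZMod.castHom (dvd_mul_right 2 n) (ZMod 2)

lemma parity_eq_zero_iff (y : ZMod (2 * n)) : parity n y = 0 ↔ Even (y.cast : ℤ) := by
  rw [parity, ZMod.castHom_apply, ← ZMod.intCast_cast, ZMod.intCast_eq_zero_iff_even]

lemma act_eq_zpow (y : Multiplicative (ZMod (2 * n))) :
    U6nAct n y = negAut ^ (y.toAdd.cast : ℤ) := by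
  conv_lhs => rw [← ofAdd_toAdd y, ← ZMod.intCast_zmod_cast y.toAdd]
  show Additive.toMul (ZMod.lift (2 * n) _ (Multiplicative.toAdd (Multiplicative.ofAdd _))) = _
  rw [toAdd_ofAdd, ZMod.lift_coe]
  rfl

lemma act_apply (y : Multiplicative (ZMod (2 * n))) (x : Multiplicative (ZMod 3)) :
    U6nAct n y x = if parity n y.toAdd = 0 then x else x⁻¹ := by
  rw [act_eq_zpow, negAut_zpow]
  simp only [parity_eq_zero_iff]
  split_ifs <;> rfl

lemma commute_iff (g h : U6n n) :
    Commute g h ↔ g.left * U6nAct n g.right h.left = h.left * U6nAct n h.right g.left := by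
  rw [Commute, SemiconjBy, SemidirectProduct.ext_iff]
  simp only [SemidirectProduct.mul_left, SemidirectProduct.mul_right, mul_comm g.right, and_true]

lemma mem_center_iff (g : U6n n) :
    g ∈ Subgroup.center (U6n n) ↔ g.left = 1 ∧ parity n g.right.toAdd = 0 := by
  constructor
  · intro hg
    have ha := (commute_iff g (Ua n)).1 (Subgroup.mem_center_iff.1 hg (Ua n)).symm
    have hb := (commute_iff g (Ub n)).1 (Subgroup.mem_center_iff.1 hg (Ub n)).symm
    simp only [Ua, Ub, SemidirectProduct.left_inr, SemidirectProduct.right_inr,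
      SemidirectProduct.left_inl, SemidirectProduct.right_inl, act_apply, toAdd_ofAdd,
      map_one] at ha hb
    -- `ha` says `g.left = g.left⁻¹`, forcing `g.left = 1`; then `hb` forces even parity.
    revert ha hb
    generalize g.left = x
    generalize parity n g.right.toAdd = p
    revert x p
    decide
  · rintro ⟨hleft, hright⟩
    refine Subgroup.mem_center_iff.2 fun h => ((commute_iff g h).2 ?_).symm
    simp [act_apply, hleft, hright]

def commLabel (g : U6n n) : Option (Multiplicative (ZMod 3)) :=
  if parity n g.right.toAdd = 0 then none else some g.left

lemma commute_iff_commLabel_eq {g h : U6n n} (hg : g ∉ Subgroup.center (U6n n))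
    (hh : h ∉ Subgroup.center (U6n n)) : Commute g h ↔ commLabel g = commLabel h := by
  rw [mem_center_iff] at hg hh
  rw [commute_iff, act_apply, act_apply, commLabel, commLabel]
  revert hg hh
  generalize g.left = x; generalize h.left = y
  generalize parity n g.right.toAdd = p; generalize parity n h.right.toAdd = q
  revert x y p q
  decide

abbrev NonCentral (n : ℕ) := {g : U6n n // g ∉ Subgroup.center (U6n n)}

lemma indepCount_zero (n : ℕ) : indepCount n 0 = 1 := by
  rw [indepCount, Set.ncard_eq_one]
  exact ⟨∅, Set.ext fun S => by simp +contextual [card_eq_zero]⟩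

section Counting

variable [NeZero n]

instance : Fintype (U6n n) := Fintype.ofEquiv _ SemidirectProduct.equivProd.symm

noncomputable instance : Fintype (NonCentral n) := Fintype.ofFinite _

lemma indepCount_eq_sum_choose {k : ℕ} (hk : k ≠ 0) :
    indepCount n k = ∑ ℓ, (#{v : NonCentral n | commLabel v.1 = ℓ}).choose k := by
  classical
  have hrel : (fun u v => ¬ (ncGraph n).Adj u v) = fun u v => commLabel u.1 = commLabel v.1 := by
    ext u v
    exact not_not.trans (commute_iff_commLabel_eq u.2 v.2)
  rw [indepCount, hrel]
  convert ncard_setOf_pairwise_eq_and_card_eq (fun v : NonCentral n => commLabel v.1) hk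

lemma card_parity_eq (a : ZMod 2) :
    #{y : Multiplicative (ZMod (2 * n)) | parity n y.toAdd = a} = n := by
  rw [← card_equiv (s := {y : ZMod (2 * n) | parity n y = a}) Multiplicative.toAdd.symm
    fun y => by simp]
  have hfib (b : ZMod 2) : #{y | parity n y = b} = #{y | parity n y = a} :=
    AddMonoidHom.card_fiber_eq_of_mem_range (parity n) (ZMod.ringHom_surjective _ b)
      (ZMod.ringHom_surjective _ a)
  have htotal := card_eq_sum_card_fiberwise (f := parity n) (s := univ) (t := univ)
    fun _ _ => mem_univ _
  simp only [hfib, sum_const, card_univ, ZMod.card, smul_eq_mul] at htotal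
  omega

lemma card_commLabel_eq (ℓ : Option (Multiplicative (ZMod 3)))
    (s : Finset (Multiplicative (ZMod 3) × Multiplicative (ZMod (2 * n))))
    (hs : ∀ g : U6n n,
      g ∉ Subgroup.center (U6n n) ∧ commLabel g = ℓ ↔ (g.left, g.right) ∈ s) :
    #{v : NonCentral n | commLabel v.1 = ℓ} = #s := by
  classical
  have hsub : ({v : NonCentral n | commLabel v.1 = ℓ} : Finset _) =
      ({g | commLabel g = ℓ} : Finset (U6n n)).subtype (· ∉ Subgroup.center (U6n n)) := by
    ext v
    simp
  rw [hsub, card_subtype, filter_filter]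
  exact card_equiv SemidirectProduct.equivProd fun g => by simpa [and_comm] using hs g

lemma card_commLabel_none : #{v : NonCentral n | commLabel v.1 = none} = 2 * n := by
  rw [card_commLabel_eq none
    (({x | x ≠ 1} : Finset _) ×ˢ ({y | parity n y.toAdd = 0} : Finset _))]
  · rw [card_product, card_parity_eq, show #{x : Multiplicative (ZMod 3) | x ≠ 1} = 2 by rfl]
  · intro g
    simp only [mem_center_iff, commLabel, mem_product, mem_filter_univ]
    split_ifs <;> simp_all

lemma card_commLabel_some (x : Multiplicative (ZMod 3)) :
    #{v : NonCentral n | commLabel v.1 = some x} = n := by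
  rw [card_commLabel_eq (some x) ({x} ×ˢ ({y | parity n y.toAdd = 1} : Finset _))]
  · rw [card_product, card_parity_eq, card_singleton, one_mul]
  · intro g
    obtain hp | hp : parity n g.right.toAdd = 0 ∨ parity n g.right.toAdd = 1 := by
      generalize parity n g.right.toAdd = p; revert p; decide
    all_goals simp [mem_center_iff, commLabel, hp, eq_comm]

lemma indepCount_of_ne_zero {k : ℕ} (hk : k ≠ 0) :
    indepCount n k = (2 * n).choose k + 3 * n.choose k := by
  rw [indepCount_eq_sum_choose hk, Fintype.sum_option, card_commLabel_none]
  simp only [card_commLabel_some, sum_const, card_univ, Fintype.card_multiplicative, ZMod.card,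
    smul_eq_mul]

end Counting

end U6n

/-- The independence polynomial of the non-commuting graph of `U_{6n}`:
`s₀ = 1`, `s_k = C(2n,k) + 3·C(n,k)` for `1 ≤ k ≤ n`, `s_k = C(2n,k)` for `n < k ≤ 2n`,
and `s_k = 0` for `k > 2n`. -/
theorem U6n_independence_polynomial (n : ℕ) (hn : 1 ≤ n) :
    indepCount n 0 = 1 ∧
    (∀ k, 1 ≤ k → k ≤ n →
      indepCount n k = Nat.choose (2 * n) k + 3 * Nat.choose n k) ∧
    (∀ k, n < k → k ≤ 2 * n → indepCount n k = Nat.choose (2 * n) k) ∧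
    (∀ k, 2 * n < k → indepCount n k = 0) := by
  have : NeZero n := ⟨by omega⟩
  refine ⟨U6n.indepCount_zero n, fun k hk _ => U6n.indepCount_of_ne_zero (by omega),
    fun k hk _ => ?_, fun k hk => ?_⟩
  · rw [U6n.indepCount_of_ne_zero (by omega), Nat.choose_eq_zero_of_lt hk, mul_zero, add_zero]
  · rw [U6n.indepCount_of_ne_zero (by omega), Nat.choose_eq_zero_of_lt hk,
      Nat.choose_eq_zero_of_lt (by omega : n < k), mul_zero, add_zero]
end
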